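/- arXiv:1802.03624 — 2 statements merged into one kernel-verified Lean document; each statement's English description precedes it below -/
import Mathlib

section
/- Let G be a subgroup of GL(m,ℝ) such that det(A - I) = 0 for every A ∈ G (G is 1-spectral). Then for every element v in a sufficiently small neighborhood of 0 in the Lie algebra of G on which the matrix logarithm is defined, det(v) = 0. Consequently, if G is a 1-spectral Lie subgroup, every element of its Lie algebra is a singular matrix. -/
/-!
In any real Banach algebra `exp x - 1 = x * u(x)` with `u(x) = ∑ xⁿ / (n + 1)!`, and
`‖u(x) - 1‖ ≤ e^‖x‖ - 1 < 1` once `‖x‖ < log 2`, so `u(x)` is a unit near `0`. For matrices this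
gives `det (exp v - 1) = det v * det u(v)` with `det u(v) ≠ 0`; if `exp v ∈ G` the left side
vanishes by 1-spectrality, hence `det v = 0`.
-/

open Matrix
open scoped Nat

section

variable {𝔸 : Type*} [NormedRing 𝔸] [NormedAlgebra ℝ 𝔸] [CompleteSpace 𝔸]

noncomputable def expSubOneDiv (x : 𝔸) : 𝔸 :=
  ∑' n : ℕ, ((n + 1)! : ℝ)⁻¹ • x ^ n

theorem summable_expSubOneDiv_series (x : 𝔸) :
    Summable fun n : ℕ => ((n + 1)! : ℝ)⁻¹ • x ^ n := by
  refine (NormedSpace.norm_expSeries_summable' (𝕂 := ℝ) x).of_norm_bounded fun n => ?_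
  simp only [norm_smul, norm_inv, RCLike.norm_natCast]
  gcongr
  omega

theorem exp_sub_one_eq_mul_expSubOneDiv (x : 𝔸) :
    NormedSpace.exp x - 1 = x * expSubOneDiv x := by
  have hexp := NormedSpace.exp_series_hasSum_exp' (𝕂 := ℝ) x
  rw [← hexp.tsum_eq, hexp.summable.tsum_eq_zero_add, expSubOneDiv,
    ← (summable_expSubOneDiv_series x).tsum_mul_left]
  simp [← pow_succ']

theorem Real.hasSum_pow_div_factorial_succ (r : ℝ) :
    HasSum (fun n : ℕ => r ^ (n + 1) / (n + 1)!) (Real.exp r - 1) := by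
  simpa [Real.exp_eq_exp_ℝ] using
    (hasSum_nat_add_iff' 1).mpr (NormedSpace.expSeries_div_hasSum_exp r)

theorem norm_expSubOneDiv_sub_one_le (x : 𝔸) :
    ‖expSubOneDiv x - 1‖ ≤ Real.exp ‖x‖ - 1 := by
  have hsplit : expSubOneDiv x - 1 = ∑' n : ℕ, ((n + 2)! : ℝ)⁻¹ • x ^ (n + 1) := by
    rw [expSubOneDiv, (summable_expSubOneDiv_series x).tsum_eq_zero_add]
    simp
  rw [hsplit]
  refine tsum_of_norm_bounded (Real.hasSum_pow_div_factorial_succ ‖x‖) fun n => ?_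
  rw [norm_smul, norm_inv, RCLike.norm_natCast, div_eq_inv_mul]
  gcongr
  · omega
  · exact norm_pow_le' x n.succ_pos

theorem isUnit_expSubOneDiv {x : 𝔸} (hx : ‖x‖ < Real.log 2) : IsUnit (expSubOneDiv x) := by
  have hlt : ‖1 - expSubOneDiv x‖ < 1 := by
    rw [norm_sub_rev]
    calc ‖expSubOneDiv x - 1‖ ≤ Real.exp ‖x‖ - 1 := norm_expSubOneDiv_sub_one_le x
      _ < Real.exp (Real.log 2) - 1 := by gcongr
      _ = 1 := by rw [Real.exp_log two_pos]; norm_num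
  simpa using isUnit_one_sub_of_norm_lt_one hlt

theorem eventually_exists_isUnit_exp_sub_one_eq_mul :
    ∀ᶠ x in nhds (0 : 𝔸), ∃ u, IsUnit u ∧ NormedSpace.exp x - 1 = x * u := by
  filter_upwards [Metric.ball_mem_nhds 0 (Real.log_pos one_lt_two)] with x hx
  exact ⟨_, isUnit_expSubOneDiv (mem_ball_zero_iff.mp hx), exp_sub_one_eq_mul_expSubOneDiv x⟩

end

theorem Matrix.eventually_det_exp_sub_one_eq_zero_iff {n 𝕂 : Type*} [Fintype n] [DecidableEq n]
    [RCLike 𝕂] :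
    ∀ᶠ v in nhds (0 : Matrix n n 𝕂), (NormedSpace.exp v - 1).det = 0 ↔ v.det = 0 := by
  suffices ∀ᶠ v in nhds (0 : Matrix n n 𝕂), ∃ u, IsUnit u ∧ NormedSpace.exp v - 1 = v * u by
    filter_upwards [this] with v ⟨u, hu, hfac⟩
    rw [hfac, det_mul, mul_eq_zero, or_iff_left ((isUnit_iff_isUnit_det u).mp hu).ne_zero]
  -- `NormedSpace.exp` only sees the topology, so any submultiplicative norm may be chosen here.
  let _ := Matrix.linftyOpNormedRing (n := n) (α := 𝕂)
  let _ := Matrix.linftyOpNormedAlgebra (R := ℝ) (n := n) (α := 𝕂)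
  exact eventually_exists_isUnit_exp_sub_one_eq_mul

/-- If `G ≤ GL(m,ℝ)` is 1-spectral (`det (A - id) = 0` for all `A ∈ G`), then every
element `v` of a sufficiently small neighborhood of `0` in `gl(m,ℝ)` (on which the
matrix logarithm is defined, i.e. `v = log A` for some `A ∈ G`, equivalently
`exp v ∈ G` with `v` small) satisfies `det v = 0`.  In particular, the Lie algebra
of a 1-spectral Lie subgroup is singular. -/
theorem lie_algebra_singular_of_one_spectral (m : ℕ)
    (G : Subgroup (Matrix.GeneralLinearGroup (Fin m) ℝ))
    (hspec : ∀ A ∈ G, ((A : Matrix (Fin m) (Fin m) ℝ) - 1).det = 0) :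
    ∃ U ∈ nhds (0 : Matrix (Fin m) (Fin m) ℝ), ∀ v ∈ U,
      (∃ A ∈ G, (A : Matrix (Fin m) (Fin m) ℝ) = NormedSpace.exp v) →
        v.det = 0 := by
  obtain ⟨U, hU, hdet⟩ :=
    (Matrix.eventually_det_exp_sub_one_eq_zero_iff (n := Fin m) (𝕂 := ℝ)).exists_mem
  refine ⟨U, hU, fun v hv ⟨A, hA, hAv⟩ => ?_⟩
  rw [← hdet v hv, ← hAv]
  exact hspec A hA
end

section
/- Let I, J be endomorphisms of the tangent bundle of a manifold M with I² = -id, J² = id, IJ = -JI, the ±1-eigendistributions H, V of J involutive, and the Nijenhuis tensor of I vanishing. Then for every z = a+bi ∈ S¹ ⊂ ℂ, the endomorphism J_z(X) = a·J(X) + b·I(J(X)) satisfies J_z² = id and its ±1-eigendistributions, namely (1+z)H and (1+z)V (in the complex structure on TM given by I), are involutive. -/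
/-!
Let `z = a + b i` act on vector fields through `I`, so that `J_z = z · J`. Since `J`
anticommutes with `I` it is conjugate-linear, hence `J_z² = z z̄ = |z|² = 1` and
`J_z ((1 + z) X) = z (1 + z̄) J X = (1 + z) J X`.

For involutivity, `N_I = 0` gives for every `w = c + d i` the identity
`⁅w X, w Y⁆ = w (c ⁅X, Y⁆ + d P)` with `P = ⁅I X, Y⁆ + ⁅X, I Y⁆ - I ⁅X, Y⁆`.
If `X, Y ∈ H` then `I X, I Y ∈ V`, so `⁅I X, I Y⁆ = ⁅X, Y⁆ + I (⁅I X, Y⁆ + ⁅X, I Y⁆)` lies in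
`V`; this determines `J (⁅I X, Y⁆ + ⁅X, I Y⁆)` and shows `P ∈ H`. The case of `V` is the case
of `H` for the para-hypercomplex structure `(I, -J)`.
-/

section Module

variable {R L : Type*} [CommRing R] [AddCommGroup L] [Module R L] {I J : L →ₗ[R] L}

def complexSMul (I : L →ₗ[R] L) (a b : R) (X : L) : L := a • X + b • I X

def paraRotation (I J : L →ₗ[R] L) (a b : R) (X : L) : L := complexSMul I a b (J X)

theorem complexSMul_neg (a b : R) (X : L) :
    complexSMul I a b (-X) = -complexSMul I a b X := by
  simp only [complexSMul, map_neg, smul_neg, neg_add]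

theorem complexSMul_complexSMul (hI : ∀ X, I (I X) = -X) (a b c d : R) (X : L) :
    complexSMul I a b (complexSMul I c d X) =
      complexSMul I (a * c - b * d) (a * d + b * c) X := by
  simp only [complexSMul, map_add, map_smul, hI]
  module

theorem map_complexSMul (hIJ : ∀ X, I (J X) = -J (I X)) (a b : R) (X : L) :
    J (complexSMul I a b X) = complexSMul I a (-b) (J X) := by
  simp only [complexSMul, map_add, map_smul, hIJ]
  module

variable {a b : R}

theorem paraRotation_paraRotation (hI : ∀ X, I (I X) = -X) (hJ : ∀ X, J (J X) = X)
    (hIJ : ∀ X, I (J X) = -J (I X)) (hab : a ^ 2 + b ^ 2 = 1) (X : L) :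
    paraRotation I J a b (paraRotation I J a b X) = X := by
  rw [paraRotation, paraRotation, map_complexSMul hIJ, hJ, complexSMul_complexSMul hI,
    show a * a - b * -b = 1 by linear_combination hab, show a * -b + b * a = 0 by ring]
  simp only [complexSMul, one_smul, zero_smul, add_zero]

theorem paraRotation_complexSMul_one_add (hI : ∀ X, I (I X) = -X)
    (hIJ : ∀ X, I (J X) = -J (I X)) (hab : a ^ 2 + b ^ 2 = 1) (X : L) :
    paraRotation I J a b (complexSMul I (1 + a) b X) = complexSMul I (1 + a) b (J X) := by
  rw [paraRotation, map_complexSMul hIJ, complexSMul_complexSMul hI,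
    show a * (1 + a) - b * -b = 1 + a by linear_combination hab,
    show a * -b + b * (1 + a) = b by ring]

end Module

section Lie

variable {R L : Type*} [CommRing R] [LieRing L] [LieAlgebra R L] {I J : L →ₗ[R] L}

def nijenhuis (I : L →ₗ[R] L) (X Y : L) : L :=
  ⁅I X, I Y⁆ - I ⁅I X, Y⁆ - I ⁅X, I Y⁆ + I (I ⁅X, Y⁆)

theorem lie_apply_apply_of_nijenhuis_eq_zero (hI : ∀ X, I (I X) = -X) {X Y : L}
    (hN : nijenhuis I X Y = 0) : ⁅I X, I Y⁆ = ⁅X, Y⁆ + I (⁅I X, Y⁆ + ⁅X, I Y⁆) := by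
  rw [nijenhuis, hI] at hN
  rw [map_add]
  linear_combination (norm := module) hN

theorem lie_complexSMul_complexSMul (hI : ∀ X, I (I X) = -X) {X Y : L}
    (hN : nijenhuis I X Y = 0) (c d : R) :
    ⁅complexSMul I c d X, complexSMul I c d Y⁆ =
      complexSMul I c d (c • ⁅X, Y⁆ + d • (⁅I X, Y⁆ + ⁅X, I Y⁆ - I ⁅X, Y⁆)) := by
  simp only [complexSMul, add_lie, lie_add, smul_lie, lie_smul,
    lie_apply_apply_of_nijenhuis_eq_zero hI hN, map_add, map_sub, map_smul, hI]
  module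

structure IsParaHypercomplex (I J : L →ₗ[R] L) : Prop where
  I_sq : ∀ X, I (I X) = -X
  J_sq : ∀ X, J (J X) = X
  I_J_anticomm : ∀ X, I (J X) = -J (I X)
  nijenhuis_eq_zero : ∀ X Y, nijenhuis I X Y = 0
  map_lie_of_eq_self : ∀ X Y, J X = X → J Y = Y → J ⁅X, Y⁆ = ⁅X, Y⁆
  map_lie_of_eq_neg : ∀ X Y, J X = -X → J Y = -Y → J ⁅X, Y⁆ = -⁅X, Y⁆

namespace IsParaHypercomplex

variable {X Y : L}

theorem neg (h : IsParaHypercomplex I J) : IsParaHypercomplex I (-J) where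
  I_sq := h.I_sq
  J_sq X := by simp only [LinearMap.neg_apply, map_neg, neg_neg, h.J_sq]
  I_J_anticomm X := by simp only [LinearMap.neg_apply, map_neg, h.I_J_anticomm]
  nijenhuis_eq_zero := h.nijenhuis_eq_zero
  map_lie_of_eq_self X Y hX hY := by
    rw [LinearMap.neg_apply, neg_eq_iff_eq_neg] at hX hY ⊢
    exact h.map_lie_of_eq_neg X Y hX hY
  map_lie_of_eq_neg X Y hX hY := by
    rw [LinearMap.neg_apply, neg_inj] at hX hY ⊢
    exact h.map_lie_of_eq_self X Y hX hY

theorem J_apply_I (h : IsParaHypercomplex I J) (X : L) : J (I X) = -I (J X) := by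
  rw [h.I_J_anticomm, neg_neg]

theorem map_lie_add_lie_sub_of_eq_self (h : IsParaHypercomplex I J) (hX : J X = X)
    (hY : J Y = Y) :
    J (⁅I X, Y⁆ + ⁅X, I Y⁆ - I ⁅X, Y⁆) = ⁅I X, Y⁆ + ⁅X, I Y⁆ - I ⁅X, Y⁆ := by
  have hW : J ⁅X, Y⁆ = ⁅X, Y⁆ := h.map_lie_of_eq_self X Y hX hY
  have hIXY : J (⁅X, Y⁆ + I (⁅I X, Y⁆ + ⁅X, I Y⁆)) = -(⁅X, Y⁆ + I (⁅I X, Y⁆ + ⁅X, I Y⁆)) := by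
    rw [← lie_apply_apply_of_nijenhuis_eq_zero h.I_sq (h.nijenhuis_eq_zero X Y)]
    exact h.map_lie_of_eq_neg _ _ (by rw [h.J_apply_I, hX]) (by rw [h.J_apply_I, hY])
  generalize ⁅I X, Y⁆ + ⁅X, I Y⁆ = S at hIXY ⊢
  have hS : J S = S - (2 : R) • I ⁅X, Y⁆ := by
    have := congrArg I hIXY
    simp only [map_add, map_neg, h.J_apply_I, hW, h.I_sq] at this
    linear_combination (norm := module) this
  rw [map_sub, hS, h.J_apply_I, hW]
  module

theorem exists_lie_complexSMul_eq_of_eq_self (h : IsParaHypercomplex I J) (c d : R)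
    (hX : J X = X) (hY : J Y = Y) :
    ∃ Z, J Z = Z ∧ ⁅complexSMul I c d X, complexSMul I c d Y⁆ = complexSMul I c d Z :=
  ⟨_, by rw [map_add, map_smul, map_smul, h.map_lie_of_eq_self X Y hX hY,
      h.map_lie_add_lie_sub_of_eq_self hX hY],
    lie_complexSMul_complexSMul h.I_sq (h.nijenhuis_eq_zero X Y) c d⟩

theorem exists_lie_complexSMul_eq_of_eq_neg (h : IsParaHypercomplex I J) (c d : R)
    (hX : J X = -X) (hY : J Y = -Y) :
    ∃ Z, J Z = -Z ∧ ⁅complexSMul I c d X, complexSMul I c d Y⁆ = complexSMul I c d Z := by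
  obtain ⟨Z, hZ, hlie⟩ := h.neg.exists_lie_complexSMul_eq_of_eq_self c d
    (by rw [LinearMap.neg_apply, hX, neg_neg]) (by rw [LinearMap.neg_apply, hY, neg_neg])
  exact ⟨Z, by rwa [LinearMap.neg_apply, neg_eq_iff_eq_neg] at hZ, hlie⟩

end IsParaHypercomplex

end Lie

open scoped Manifold

section

variable {E : Type*} [NormedAddCommGroup E] [NormedSpace ℝ E]
  {Hm : Type*} [TopologicalSpace Hm] (I : ModelWithCorners ℝ E Hm)
  (M : Type*) [TopologicalSpace M] [ChartedSpace Hm M] [IsManifold I (⊤ : ℕ∞) M]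

local notation "VF" => Derivation ℝ C^(⊤ : ℕ∞)⟮I, M; ℝ⟯ C^(⊤ : ℕ∞)⟮I, M; ℝ⟯

/-- Let `(Iop, Jop)` be a para-hypercomplex structure on `M`: `Iop² = -id`,
`Jop² = id`, `Iop Jop = -Jop Iop`, the `±1`-eigendistributions `H`, `V` of `Jop`
involutive and the Nijenhuis tensor of `Iop` vanishing.  Then for every
`z = a + b i ∈ S¹`, the endomorphism `J_z X = a·Jop X + b·Iop (Jop X)` satisfies
`J_z² = id`, its `±1`-eigendistributions are `(1+z)H` and `(1+z)V` (where
`(1+z)·X = (1+a)X + b·Iop X`), and these are involutive. -/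
theorem para_complex_rotation (Iop Jop : VF →ₗ[C^(⊤ : ℕ∞)⟮I, M; ℝ⟯] VF)
    (hI2 : ∀ X : VF, Iop (Iop X) = -X)
    (hJ2 : ∀ X : VF, Jop (Jop X) = X)
    (hIJ : ∀ X : VF, Iop (Jop X) = -(Jop (Iop X)))
    (hNI : ∀ X Y : VF,
      -(Iop (Iop ⁅X, Y⁆)) + Iop (⁅Iop X, Y⁆ + ⁅X, Iop Y⁆) - ⁅Iop X, Iop Y⁆ = 0)
    (hHinv : ∀ X Y : VF, Jop X = X → Jop Y = Y → Jop ⁅X, Y⁆ = ⁅X, Y⁆)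
    (hVinv : ∀ X Y : VF, Jop X = -X → Jop Y = -Y → Jop ⁅X, Y⁆ = -⁅X, Y⁆)
    (a b : ℝ) (hz : a ^ 2 + b ^ 2 = 1) :
    let Jz : VF → VF := fun X => a • Jop X + b • Iop (Jop X)
    let mulOnePlusZ : VF → VF := fun X => (1 + a) • X + b • Iop X
    (∀ X : VF, Jz (Jz X) = X) ∧
    (∀ X : VF, Jop X = X → Jz (mulOnePlusZ X) = mulOnePlusZ X) ∧
    (∀ X : VF, Jop X = -X → Jz (mulOnePlusZ X) = -(mulOnePlusZ X)) ∧
    (∀ X Y : VF, Jop X = X → Jop Y = Y →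
      ∃ Z : VF, Jop Z = Z ∧ ⁅mulOnePlusZ X, mulOnePlusZ Y⁆ = mulOnePlusZ Z) ∧
    (∀ X Y : VF, Jop X = -X → Jop Y = -Y →
      ∃ Z : VF, Jop Z = -Z ∧ ⁅mulOnePlusZ X, mulOnePlusZ Y⁆ = mulOnePlusZ Z) := by
  have h : IsParaHypercomplex (Iop.restrictScalars ℝ) (Jop.restrictScalars ℝ) :=
    { I_sq := hI2
      J_sq := hJ2
      I_J_anticomm := hIJ
      nijenhuis_eq_zero := fun X Y => by
        rw [← neg_eq_zero, ← hNI X Y]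
        simp only [nijenhuis, LinearMap.restrictScalars_apply, map_add]
        abel
      map_lie_of_eq_self := hHinv
      map_lie_of_eq_neg := hVinv }
  intro Jz mulOnePlusZ
  refine ⟨fun X => ?_, fun X hX => ?_, fun X hX => ?_, fun X Y hX hY => ?_, fun X Y hX hY => ?_⟩
  · exact paraRotation_paraRotation h.I_sq h.J_sq h.I_J_anticomm hz X
  · have := paraRotation_complexSMul_one_add h.I_sq h.I_J_anticomm hz X
    rwa [show Jop.restrictScalars ℝ X = X from hX] at this
  · have := paraRotation_complexSMul_one_add h.I_sq h.I_J_anticomm hz X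
    rwa [show Jop.restrictScalars ℝ X = -X from hX, complexSMul_neg] at this
  · exact h.exists_lie_complexSMul_eq_of_eq_self _ _ hX hY
  · exact h.exists_lie_complexSMul_eq_of_eq_neg _ _ hX hY

end
end
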